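/- Let N₁ = p₁q₁, N₂ = p₂q₂, a : {0,…,N₁−1}×{0,…,N₂−1} → ℂ, μ₁, μ₂ ∈ ℤ, M₁, M₂ ≥ 0, and ε > 0. Suppose Q₁, Q₂ : ℝ → ℂ satisfy |Q_d(x) − e^{πi x}| ≤ ε for |x| ≤ M_d/p_d (d = 1, 2). Define ℰ(â)_{m₁,m₂} = Σ_{k₁,k₂,l₁,l₂} a_{q₁k₁+l₁,q₂k₂+l₂} ∏_{d=1,2} e^{πi v_d μ_d} Q_d(v_d(m_d − μ_d)) e^{-2πi m_d k_d/p_d} e^{-πi m_d/p_d}, where v_d = −2(l_d − q_d/2)/N_d. Then for all integers (m₁, m₂) with |m_d − μ_d| ≤ M_d for d = 1, 2, |â_{m₁,m₂} − ℰ(â)_{m₁,m₂}| ≤ (Σ_{n₁,n₂} |a_{n₁,n₂}|) · (ε² + 2ε). -/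

import Mathlib

open Complex Real

/-!
Split `n = q k + l` with `k < p`, `l < q`. With the centred node `v = -2 (l - q/2) / N` the exact
twiddle factor splits as `e^{-2πi m n/N} = e^{πi v μ} e^{πi v (m - μ)} e^{-2πi m k/p} e^{-πi m/p}`,
and `|v| ≤ 1/p` keeps `v (m - μ)` in the range where `Q` is `ε`-close to `x ↦ e^{πi x}`. Hence each
one-dimensional factor is `ε`-close to its approximation; as the exact factors are unimodular, the
product of the two is `(ε² + 2ε)`-close, and the triangle inequality over all terms concludes.
-/

theorem Finset.sum_range_mul_eq_sum_sum {M : Type*} [AddCommMonoid M] (p q : ℕ) (f : ℕ → M) :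
    ∑ n ∈ range (p * q), f n = ∑ k ∈ range p, ∑ l ∈ range q, f (q * k + l) := by
  induction p with
  | zero => simp
  | succ p ih => rw [Nat.succ_mul, sum_range_add, ih, sum_range_succ, Nat.mul_comm]

theorem Finset.sum_range_mul_sum_range_mul_eq {M : Type*} [AddCommMonoid M]
    (p₁ q₁ p₂ q₂ : ℕ) (f : ℕ → ℕ → M) :
    ∑ n₁ ∈ range (p₁ * q₁), ∑ n₂ ∈ range (p₂ * q₂), f n₁ n₂ =
      ∑ k₁ ∈ range p₁, ∑ k₂ ∈ range p₂, ∑ l₁ ∈ range q₁, ∑ l₂ ∈ range q₂,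
        f (q₁ * k₁ + l₁) (q₂ * k₂ + l₂) := by
  simp only [sum_range_mul_eq_sum_sum]
  exact sum_congr rfl fun _ _ => sum_comm

theorem norm_sum_sub_sum_le_of_forall_le {ι E : Type*} [SeminormedAddCommGroup E]
    {s : Finset ι} {f g : ι → E} {b : ι → ℝ} (h : ∀ i ∈ s, ‖f i - g i‖ ≤ b i) :
    ‖∑ i ∈ s, f i - ∑ i ∈ s, g i‖ ≤ ∑ i ∈ s, b i := by
  rw [← Finset.sum_sub_distrib]
  exact (norm_sum_le _ _).trans (Finset.sum_le_sum h)

theorem norm_mul_sub_mul_le_of_norm_eq_one {R : Type*} [SeminormedRing R] {z₁ z₂ w₁ w₂ : R}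
    {ε : ℝ} (h₁ : ‖z₁‖ = 1) (h₂ : ‖z₂‖ = 1) (e₁ : ‖z₁ - w₁‖ ≤ ε) (e₂ : ‖z₂ - w₂‖ ≤ ε) :
    ‖z₁ * z₂ - w₁ * w₂‖ ≤ ε ^ 2 + 2 * ε := by
  have hε : 0 ≤ ε := (norm_nonneg _).trans e₁
  have hw₂ : ‖w₂‖ ≤ 1 + ε := by
    have := norm_le_norm_add_norm_sub' w₂ z₂
    rw [h₂, norm_sub_rev] at this
    linarith
  calc ‖z₁ * z₂ - w₁ * w₂‖ = ‖z₁ * (z₂ - w₂) + (z₁ - w₁) * w₂‖ := by noncomm_ring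
    _ ≤ ‖z₁‖ * ‖z₂ - w₂‖ + ‖z₁ - w₁‖ * ‖w₂‖ :=
      (norm_add_le _ _).trans (add_le_add (norm_mul_le _ _) (norm_mul_le _ _))
    _ ≤ 1 * ε + ε * (1 + ε) := by rw [h₁]; gcongr
    _ = ε ^ 2 + 2 * ε := by ring

/-- The node `v_l` of the paper. -/
noncomputable def centeredNode (q N l : ℕ) : ℝ := -2 * ((l : ℝ) - q / 2) / N

theorem abs_centeredNode_le {p q l : ℕ} (hl : l < q) : |centeredNode q (p * q) l| ≤ 1 / p := by
  have hq : (0 : ℝ) < q := by exact_mod_cast (Nat.zero_le l).trans_lt hl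
  have hl' : (l : ℝ) + 1 ≤ q := by exact_mod_cast hl
  have hnum : |-2 * ((l : ℝ) - q / 2)| ≤ q :=
    abs_le.2 ⟨by linarith, by linarith [l.cast_nonneg (α := ℝ)]⟩
  calc |centeredNode q (p * q) l| = |-2 * ((l : ℝ) - q / 2)| / (p * q) := by
        rw [centeredNode, Nat.cast_mul, abs_div, abs_of_nonneg (a := (p : ℝ) * q) (by positivity)]
    _ ≤ q / (p * q) := by gcongr
    _ = 1 / p := by rw [div_mul_cancel_right₀ hq.ne', one_div]

theorem exp_eq_centeredNode_split {p q : ℕ} (hp : p ≠ 0) (hq : q ≠ 0) (m μ : ℂ) (k l : ℕ) :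
    Complex.exp (-2 * π * I * m * ((q * k + l : ℕ) : ℂ) / ((p * q : ℕ) : ℂ)) =
      Complex.exp (π * I * (centeredNode q (p * q) l : ℂ) * μ) *
        Complex.exp (π * I * ((centeredNode q (p * q) l : ℂ) * (m - μ))) *
        Complex.exp (-2 * π * I * m * k / p) * Complex.exp (-π * I * m / p) := by
  simp only [← Complex.exp_add, centeredNode]
  congr 1
  push_cast
  field_simp
  ring

theorem norm_exp_sub_centered_approx_le {p q : ℕ} (hp : p ≠ 0) {l : ℕ} (hl : l < q) (k : ℕ)
    {m μ : ℤ} {M ε : ℝ} {Q : ℝ → ℂ}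
    (hQ : ∀ x : ℝ, |x| ≤ M / p → ‖Q x - Complex.exp (π * I * x)‖ ≤ ε)
    (hm : |(m : ℝ) - μ| ≤ M) :
    ‖Complex.exp (-2 * π * I * m * ((q * k + l : ℕ) : ℂ) / ((p * q : ℕ) : ℂ)) -
      Complex.exp (π * I * (centeredNode q (p * q) l : ℂ) * μ) *
        Q (centeredNode q (p * q) l * ((m : ℝ) - μ)) *
        Complex.exp (-2 * π * I * m * k / p) * Complex.exp (-π * I * m / p)‖ ≤ ε := by
  set v := centeredNode q (p * q) l
  have hx : |v * ((m : ℝ) - μ)| ≤ M / p := by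
    rw [abs_mul, ← one_div_mul_eq_div]
    exact mul_le_mul (abs_centeredNode_le hl) hm (abs_nonneg _) (by positivity)
  have hQx := hQ _ hx
  push_cast at hQx
  rw [exp_eq_centeredNode_split (q := q) hp (by omega), ← sub_mul, ← sub_mul, ← mul_sub,
    norm_mul, norm_mul, norm_mul, norm_sub_rev]
  simpa [Complex.norm_exp] using hQx

theorem norm_exp_neg_two_pi_I_mul_div (m : ℤ) (n N : ℕ) :
    ‖Complex.exp (-2 * π * I * m * n / N)‖ = 1 := by
  simp [Complex.norm_exp]

theorem pft_error_bound_2d_general (p₁ q₁ N₁ p₂ q₂ N₂ : ℕ)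
    (hN₁ : N₁ = p₁ * q₁)
    (hN₂ : N₂ = p₂ * q₂)
    (a : ℕ → ℕ → ℂ) (μ₁ μ₂ : ℤ) (M₁ M₂ : ℝ)
    (ε : ℝ) (Q₁ Q₂ : ℝ → ℂ)
    (hQ₁ : ∀ x : ℝ, |x| ≤ M₁ / p₁ →
      ‖Q₁ x - Complex.exp (π * I * x)‖ ≤ ε)
    (hQ₂ : ∀ x : ℝ, |x| ≤ M₂ / p₂ →
      ‖Q₂ x - Complex.exp (π * I * x)‖ ≤ ε)
    (m₁ m₂ : ℤ) (hm₁ : |(m₁ : ℝ) - μ₁| ≤ M₁) (hm₂ : |(m₂ : ℝ) - μ₂| ≤ M₂) :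
    ‖(∑ n₁ ∈ Finset.range N₁, ∑ n₂ ∈ Finset.range N₂,
            a n₁ n₂ * Complex.exp (-2 * π * I * m₁ * n₁ / N₁) *
              Complex.exp (-2 * π * I * m₂ * n₂ / N₂)) -
          ∑ k₁ ∈ Finset.range p₁, ∑ k₂ ∈ Finset.range p₂,
            ∑ l₁ ∈ Finset.range q₁, ∑ l₂ ∈ Finset.range q₂,
              a (q₁ * k₁ + l₁) (q₂ * k₂ + l₂) *
                (Complex.exp (π * I *
                    ((-2 * ((l₁ : ℝ) - q₁ / 2) / N₁ : ℝ) : ℂ) * μ₁) *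
                  Q₁ ((-2 * ((l₁ : ℝ) - q₁ / 2) / N₁) * ((m₁ : ℝ) - μ₁)) *
                  Complex.exp (-2 * π * I * m₁ * k₁ / p₁) *
                  Complex.exp (-π * I * m₁ / p₁)) *
                (Complex.exp (π * I *
                    ((-2 * ((l₂ : ℝ) - q₂ / 2) / N₂ : ℝ) : ℂ) * μ₂) *
                  Q₂ ((-2 * ((l₂ : ℝ) - q₂ / 2) / N₂) * ((m₂ : ℝ) - μ₂)) *
                  Complex.exp (-2 * π * I * m₂ * k₂ / p₂) *
                  Complex.exp (-π * I * m₂ / p₂))‖ ≤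
      (∑ n₁ ∈ Finset.range N₁, ∑ n₂ ∈ Finset.range N₂,
          ‖a n₁ n₂‖) * (ε ^ 2 + 2 * ε) := by
  subst hN₁ hN₂
  simp only [Finset.sum_range_mul_sum_range_mul_eq, Finset.sum_mul]
  refine norm_sum_sub_sum_le_of_forall_le fun k₁ hk₁ => norm_sum_sub_sum_le_of_forall_le
    fun k₂ hk₂ => norm_sum_sub_sum_le_of_forall_le fun l₁ hl₁ =>
      norm_sum_sub_sum_le_of_forall_le fun l₂ hl₂ => ?_
  rw [Finset.mem_range] at hk₁ hk₂ hl₁ hl₂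
  rw [mul_assoc (a _ _), mul_assoc (a _ _), ← mul_sub, norm_mul]
  gcongr
  exact norm_mul_sub_mul_le_of_norm_eq_one (norm_exp_neg_two_pi_I_mul_div _ _ _)
    (norm_exp_neg_two_pi_I_mul_div _ _ _)
    (norm_exp_sub_centered_approx_le (by omega) hl₁ k₁ hQ₁ hm₁)
    (norm_exp_sub_centered_approx_le (by omega) hl₂ k₂ hQ₂ hm₂)

theorem pft_error_bound_2d (p₁ q₁ N₁ p₂ q₂ N₂ : ℕ)
    (hp₁ : 1 ≤ p₁) (hq₁ : 1 ≤ q₁) (hN₁ : N₁ = p₁ * q₁)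
    (hp₂ : 1 ≤ p₂) (hq₂ : 1 ≤ q₂) (hN₂ : N₂ = p₂ * q₂)
    (a : ℕ → ℕ → ℂ) (μ₁ μ₂ : ℤ) (M₁ M₂ : ℝ) (hM₁ : 0 ≤ M₁) (hM₂ : 0 ≤ M₂)
    (ε : ℝ) (hε : 0 < ε) (Q₁ Q₂ : ℝ → ℂ)
    (hQ₁ : ∀ x : ℝ, |x| ≤ M₁ / p₁ →
      ‖Q₁ x - Complex.exp (π * I * x)‖ ≤ ε)
    (hQ₂ : ∀ x : ℝ, |x| ≤ M₂ / p₂ →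
      ‖Q₂ x - Complex.exp (π * I * x)‖ ≤ ε)
    (m₁ m₂ : ℤ) (hm₁ : |(m₁ : ℝ) - μ₁| ≤ M₁) (hm₂ : |(m₂ : ℝ) - μ₂| ≤ M₂) :
    ‖(∑ n₁ ∈ Finset.range N₁, ∑ n₂ ∈ Finset.range N₂,
            a n₁ n₂ * Complex.exp (-2 * π * I * m₁ * n₁ / N₁) *
              Complex.exp (-2 * π * I * m₂ * n₂ / N₂)) -
          ∑ k₁ ∈ Finset.range p₁, ∑ k₂ ∈ Finset.range p₂,
            ∑ l₁ ∈ Finset.range q₁, ∑ l₂ ∈ Finset.range q₂,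
              a (q₁ * k₁ + l₁) (q₂ * k₂ + l₂) *
                (Complex.exp (π * I *
                    ((-2 * ((l₁ : ℝ) - q₁ / 2) / N₁ : ℝ) : ℂ) * μ₁) *
                  Q₁ ((-2 * ((l₁ : ℝ) - q₁ / 2) / N₁) * ((m₁ : ℝ) - μ₁)) *
                  Complex.exp (-2 * π * I * m₁ * k₁ / p₁) *
                  Complex.exp (-π * I * m₁ / p₁)) *
                (Complex.exp (π * I *
                    ((-2 * ((l₂ : ℝ) - q₂ / 2) / N₂ : ℝ) : ℂ) * μ₂) *
                  Q₂ ((-2 * ((l₂ : ℝ) - q₂ / 2) / N₂) * ((m₂ : ℝ) - μ₂)) *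
                  Complex.exp (-2 * π * I * m₂ * k₂ / p₂) *
                  Complex.exp (-π * I * m₂ / p₂))‖ ≤
      (∑ n₁ ∈ Finset.range N₁, ∑ n₂ ∈ Finset.range N₂,
          ‖a n₁ n₂‖) * (ε ^ 2 + 2 * ε) :=
  pft_error_bound_2d_general p₁ q₁ N₁ p₂ q₂ N₂ hN₁ hN₂ a μ₁ μ₂ M₁ M₂ ε Q₁ Q₂ hQ₁ hQ₂ m₁ m₂ hm₁ hm₂
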